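/- In the fair-division instance constructed from a Clique instance (G = (V,E), k) with ℓ = k(k−1)/2 and m = |E| ≥ ℓ — goods: ℓ popular goods, k specialized goods, ℓ+1 dummy goods; agents V ∪ E ∪ S ∪ W with S = {s_1,…,s_{ℓ+1}}, W = {w_{ij} : i ∈ [n], j ∈ [ℓ+1]}; graph H: each edge-agent e = (u,v) adjacent to all of S and to u and v, each vertex-agent v_i adjacent to all w_{ij}, and each {w_{i1},…,w_{i(ℓ+1)}} a clique; valuations: all agents value all popular goods, vertex-agents additionally value all specialized goods, s_i additionally values the dummy good d_i — in every allocation π that is complete, non-wasteful, and graph-envy-free with respect to H, no agent of V receives more than one specialized good. -/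
import Mathlib


namespace CliqueGoodsReduction

/-- Agents of the reduced instance: a vertex agent for each vertex of `G`, an
edge agent for each edge of `G`, the agents `s_1, …, s_{ℓ+1}` and the agents
`w_{ij}` for `i ∈ [n]`, `j ∈ [ℓ+1]`. -/
inductive Agent (n m ℓ : ℕ) where
  | vert (i : Fin n)
  | edg (t : Fin m)
  | sag (i : Fin (ℓ + 1))
  | wag (i : Fin n) (j : Fin (ℓ + 1))
deriving DecidableEq

/-- Goods of the reduced instance: `ℓ` popular goods, `k` specialized goods and
`ℓ + 1` dummy goods. -/
inductive Good (k ℓ : ℕ) where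
  | pop (i : Fin ℓ)
  | spec (i : Fin k)
  | dum (i : Fin (ℓ + 1))
deriving DecidableEq

/-- The social network `H`: each edge agent `e_t = (u,v)` is adjacent to all of
`S` and to the vertex agents `u` and `v`; each vertex agent `v_i` is adjacent
to all `w_{ij}`; and `{w_{i1}, …, w_{i(ℓ+1)}}` induces a clique for each `i`.
Here `ep t` gives the pair of endpoints of the edge `e_t`. -/
def H (n m ℓ : ℕ) (ep : Fin m → Fin n × Fin n) : SimpleGraph (Agent n m ℓ) :=
  SimpleGraph.fromRel (fun a b =>
    match a, b with
    | .edg _, .sag _ => True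
    | .edg t, .vert p => p = (ep t).1 ∨ p = (ep t).2
    | .vert i, .wag i' _ => i = i'
    | .wag i _, .wag i' _ => i = i'
    | _, _ => False)

/-- Additive 0/1 valuations: all agents value all popular goods; vertex agents
additionally value all specialized goods; `s_i` additionally values the dummy
good `d_i`; all other values are 0. -/
def val (n m k ℓ : ℕ) : Agent n m ℓ → Good k ℓ → ℕ
  | _, .pop _ => 1
  | .vert _, .spec _ => 1
  | .sag i, .dum j => if i = j then 1 else 0
  | _, _ => 0

set_option linter.unusedVariables false

/-- auxiliary: is a good popular? -/
def isPop {k ℓ : ℕ} : Good k ℓ → Bool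
  | .pop _ => true
  | _ => false

/-- auxiliary: is a good specialized? -/
def isSpec {k ℓ : ℕ} : Good k ℓ → Bool
  | .spec _ => true
  | _ => false

/-- number of popular goods in the bundle of `a` -/
def npop {n m k ℓ : ℕ} (π : Agent n m ℓ → Finset (Good k ℓ)) (a : Agent n m ℓ) : ℕ :=
  ((π a).filter (fun g => isPop g = true)).card

/-- number of specialized goods in the bundle of `a` -/
def nspec {n m k ℓ : ℕ} (π : Agent n m ℓ → Finset (Good k ℓ)) (a : Agent n m ℓ) : ℕ :=
  ((π a).filter (fun g => isSpec g = true)).card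

lemma pair_eq_pair {α : Type*} [DecidableEq α] {a b c d : α}
    (h : ({a, b} : Finset α) = {c, d}) (hab : a ≠ b) :
    (a = c ∧ b = d) ∨ (a = d ∧ b = c) := by
  have ha : a ∈ ({c, d} : Finset α) := by rw [← h]; simp
  have hb : b ∈ ({c, d} : Finset α) := by rw [← h]; simp
  simp only [Finset.mem_insert, Finset.mem_singleton] at ha hb
  have hc : c ∈ ({a, b} : Finset α) := by rw [h]; simp
  have hd : d ∈ ({a, b} : Finset α) := by rw [h]; simp
  simp only [Finset.mem_insert, Finset.mem_singleton] at hc hd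
  rcases ha with rfl | rfl <;> rcases hb with rfl | rfl <;> simp_all

/-- With `ℓ = C(k,2)` and `m ≥ ℓ`, in every complete,
non-wasteful allocation that is graph-envy-free w.r.t. `H`, no vertex agent
receives more than one specialized good. -/
theorem at_most_one_specialized_good
    (n m k ℓ : ℕ) (hℓ : ℓ = k.choose 2) (hm : ℓ ≤ m)
    (G : SimpleGraph (Fin n)) (ep : Fin m → Fin n × Fin n)
    (hep : ∀ t : Fin m, G.Adj (ep t).1 (ep t).2)
    (hsurj : ∀ x y : Fin n, G.Adj x y → ∃ t : Fin m, ep t = (x, y) ∨ ep t = (y, x))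
    (hinj : ∀ t t' : Fin m,
      (ep t = ep t' ∨ ep t = ((ep t').2, (ep t').1)) → t = t')
    (π : Agent n m ℓ → Finset (Good k ℓ))
    (hdisj : ∀ a b : Agent n m ℓ, a ≠ b → Disjoint (π a) (π b))
    (hcomplete : ∀ g : Good k ℓ, ∃ a : Agent n m ℓ, g ∈ π a)
    (hnonwasteful : ∀ a : Agent n m ℓ, ∀ g ∈ π a, val n m k ℓ a g = 1)
    (hgef : ∀ a b : Agent n m ℓ, (H n m ℓ ep).Adj a b →
      ∑ g ∈ π b, val n m k ℓ a g ≤ ∑ g ∈ π a, val n m k ℓ a g) :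
    ∀ (p : Fin n) (i i' : Fin k),
      Good.spec i ∈ π (Agent.vert p) → Good.spec i' ∈ π (Agent.vert p) → i = i' := by
  intro p i i' hi hi'
  by_contra hne
  -- basic numerics
  have hk2 : 2 ≤ k := by
    have h1 := i.isLt
    have h2 := i'.isLt
    have h3 : (i : ℕ) ≠ (i' : ℕ) := fun h => hne (Fin.val_injective h)
    omega
  have hl1 : 1 ≤ ℓ := by
    rw [hℓ]; exact Nat.choose_pos hk2
  -- uniqueness of holders
  have huniq : ∀ (a b : Agent n m ℓ) (g : Good k ℓ), g ∈ π a → g ∈ π b → a = b := by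
    intro a b g hga hgb
    by_contra hab
    exact (Finset.disjoint_left.1 (hdisj a b hab)) hga hgb
  -- value formulas
  have valE : ∀ (t : Fin m) (g : Good k ℓ),
      val n m k ℓ (.edg t) g = if isPop g = true then 1 else 0 := by
    intro t g; cases g <;> simp [val, isPop]
  have valW : ∀ (q : Fin n) (j : Fin (ℓ+1)) (g : Good k ℓ),
      val n m k ℓ (.wag q j) g = if isPop g = true then 1 else 0 := by
    intro q j g; cases g <;> simp [val, isPop]
  have valV : ∀ (q : Fin n) (g : Good k ℓ),
      val n m k ℓ (.vert q) g
        = (if isPop g = true then 1 else 0) + (if isSpec g = true then 1 else 0) := by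
    intro q g; cases g <;> simp [val, isPop, isSpec]
  have valS : ∀ (j : Fin (ℓ+1)) (g : Good k ℓ),
      val n m k ℓ (.sag j) g
        = (if isPop g = true then 1 else 0) + (if g = Good.dum j then 1 else 0) := by
    intro j g; cases g <;> simp [val, isPop, eq_comm]
  -- sum formulas
  have sumE : ∀ (t : Fin m) (a : Agent n m ℓ),
      ∑ g ∈ π a, val n m k ℓ (.edg t) g = npop π a := by
    intro t a
    rw [npop, Finset.card_filter]
    exact Finset.sum_congr rfl (fun g _ => valE t g)
  have sumW : ∀ (q : Fin n) (j : Fin (ℓ+1)) (a : Agent n m ℓ),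
      ∑ g ∈ π a, val n m k ℓ (.wag q j) g = npop π a := by
    intro q j a
    rw [npop, Finset.card_filter]
    exact Finset.sum_congr rfl (fun g _ => valW q j g)
  have sumV : ∀ (q : Fin n) (a : Agent n m ℓ),
      ∑ g ∈ π a, val n m k ℓ (.vert q) g = npop π a + nspec π a := by
    intro q a
    rw [npop, nspec, Finset.card_filter, Finset.card_filter, ← Finset.sum_add_distrib]
    exact Finset.sum_congr rfl (fun g _ => valV q g)
  have sumS : ∀ (j : Fin (ℓ+1)) (a : Agent n m ℓ),
      ∑ g ∈ π a, val n m k ℓ (.sag j) g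
        = npop π a + (if Good.dum j ∈ π a then 1 else 0) := by
    intro j a
    rw [npop, Finset.card_filter, ← Finset.sum_ite_eq' (π a) (Good.dum j) (fun _ => 1),
      ← Finset.sum_add_distrib]
    exact Finset.sum_congr rfl (fun g _ => valS j g)
  -- adjacency facts
  have adjWW : ∀ (q : Fin n) (j j' : Fin (ℓ+1)), j ≠ j' →
      (H n m ℓ ep).Adj (.wag q j) (.wag q j') := by
    intro q j j' hjj
    rw [H, SimpleGraph.fromRel_adj]
    exact ⟨by simp [hjj], Or.inl rfl⟩
  have adjVW : ∀ (q : Fin n) (j : Fin (ℓ+1)),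
      (H n m ℓ ep).Adj (.vert q) (.wag q j) := by
    intro q j
    rw [H, SimpleGraph.fromRel_adj]
    exact ⟨by simp, Or.inl rfl⟩
  have adjES : ∀ (t : Fin m) (j : Fin (ℓ+1)),
      (H n m ℓ ep).Adj (.edg t) (.sag j) := by
    intro t j
    rw [H, SimpleGraph.fromRel_adj]
    exact ⟨by simp, Or.inl trivial⟩
  have adjEV : ∀ (t : Fin m) (q : Fin n), (q = (ep t).1 ∨ q = (ep t).2) →
      (H n m ℓ ep).Adj (.edg t) (.vert q) := by
    intro t q hq
    rw [H, SimpleGraph.fromRel_adj]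
    exact ⟨by simp, Or.inl hq⟩
  -- key counting lemma: any family of agents holds at most ℓ popular goods
  have popbound : ∀ (A : Finset (Agent n m ℓ)), ∑ a ∈ A, npop π a ≤ ℓ := by
    intro A
    have hdisj' : ∀ x ∈ A, ∀ y ∈ A, x ≠ y →
        Disjoint ((π x).filter (fun g => isPop g = true))
          ((π y).filter (fun g => isPop g = true)) := by
      intro x _ y _ hxy
      exact Finset.disjoint_filter_filter (hdisj x y hxy)
    have hb : ∑ a ∈ A, npop π a
        = (A.biUnion (fun a => (π a).filter (fun g => isPop g = true))).card :=
      (Finset.card_biUnion hdisj').symm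
    rw [hb]
    have hsub : (A.biUnion (fun a => (π a).filter (fun g => isPop g = true)))
        ⊆ (Finset.univ : Finset (Fin ℓ)).image Good.pop := by
      intro g hg
      simp only [Finset.mem_biUnion, Finset.mem_filter] at hg
      obtain ⟨a, _, _, hpg⟩ := hg
      cases g with
      | pop j => simp
      | spec j => simp [isPop] at hpg
      | dum j => simp [isPop] at hpg
    calc _ ≤ ((Finset.univ : Finset (Fin ℓ)).image Good.pop).card :=
            Finset.card_le_card hsub
      _ = ℓ := by
            rw [Finset.card_image_of_injective _ (fun a b h => by injection h)]
            simp
  -- membership implies positive npop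
  have mem_npop : ∀ (a : Agent n m ℓ) (j : Fin ℓ), Good.pop j ∈ π a → 1 ≤ npop π a := by
    intro a j hj
    exact Finset.card_pos.2 ⟨Good.pop j, Finset.mem_filter.2 ⟨hj, rfl⟩⟩
  -- w-agents hold no popular goods
  have wzero : ∀ (q : Fin n) (j : Fin (ℓ+1)), npop π (.wag q j) = 0 := by
    intro q j
    have heq : ∀ j' : Fin (ℓ+1), npop π (.wag q j') = npop π (.wag q j) := by
      intro j'
      rcases eq_or_ne j' j with rfl | hjj
      · rfl
      · have h1 := hgef _ _ (adjWW q j' j hjj)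
        have h2 := hgef _ _ ((adjWW q j' j hjj).symm)
        rw [sumW, sumW] at h1
        rw [sumW, sumW] at h2
        omega
    have hb := popbound ((Finset.univ : Finset (Fin (ℓ+1))).image (Agent.wag q))
    rw [Finset.sum_image (by intro x _ y _ h; injection h)] at hb
    rw [Finset.sum_congr rfl (fun j' _ => heq j'), Finset.sum_const,
      Finset.card_univ, Fintype.card_fin, smul_eq_mul] at hb
    rcases Nat.eq_zero_or_pos (npop π (.wag q j)) with h | h
    · exact h
    · exfalso
      have : ℓ + 1 ≤ (ℓ + 1) * npop π (.wag q j) := Nat.le_mul_of_pos_right _ h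
      omega
  -- vertex agents hold no popular goods
  have vzero : ∀ (q : Fin n), npop π (.vert q) = 0 := by
    intro q
    have h := hgef _ _ ((adjVW q ⟨0, Nat.succ_pos ℓ⟩).symm)
    rw [sumW, sumW] at h
    have := wzero q ⟨0, Nat.succ_pos ℓ⟩
    omega
  -- each s_j holds its dummy good
  have sdum : ∀ j : Fin (ℓ+1), Good.dum j ∈ π (.sag j) := by
    intro j
    obtain ⟨a, ha⟩ := hcomplete (Good.dum j)
    have hv := hnonwasteful a _ ha
    cases a with
    | vert q => simp [val] at hv
    | edg t => simp [val] at hv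
    | wag q j' => simp [val] at hv
    | sag j' =>
        have hej : j' = j := by
          by_contra hj
          simp [val, hj] at hv
        subst hej; exact ha
  -- s-agents hold no popular goods
  have szero : ∀ j : Fin (ℓ+1), npop π (.sag j) = 0 := by
    intro j
    by_contra hz
    have hz1 : 1 ≤ npop π (.sag j) := Nat.pos_of_ne_zero hz
    have hedge : ∀ t : Fin m, 1 ≤ npop π (.edg t) := by
      intro t
      have h := hgef _ _ (adjES t j)
      rw [sumE, sumE] at h
      omega
    have hb := popbound (insert (.sag j)
      ((Finset.univ : Finset (Fin m)).image Agent.edg))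
    rw [Finset.sum_insert (by simp)] at hb
    rw [Finset.sum_image (by intro x _ y _ h; injection h)] at hb
    have : (m : ℕ) ≤ ∑ t : Fin m, npop π (Agent.edg t) := by
      calc (m:ℕ) = ∑ _t : Fin m, 1 := by simp
        _ ≤ _ := Finset.sum_le_sum (fun t _ => hedge t)
    omega
  -- every edge agent holds at most one popular good
  have eone : ∀ t : Fin m, npop π (.edg t) ≤ 1 := by
    intro t
    set j0 : Fin (ℓ+1) := ⟨0, Nat.succ_pos ℓ⟩ with hj0
    have h := hgef _ _ ((adjES t j0).symm)
    rw [sumS, sumS] at h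
    have hd : Good.dum j0 ∉ π (.edg t) := by
      intro hc
      have := huniq _ _ _ hc (sdum j0)
      simp at this
    rw [if_neg hd, if_pos (sdum j0), szero j0] at h
    omega
  -- each popular good is held by an edge agent
  have hpopheld : ∀ j : Fin ℓ, ∃ t : Fin m, Good.pop j ∈ π (.edg t) := by
    intro j
    obtain ⟨a, ha⟩ := hcomplete (Good.pop j)
    cases a with
    | edg t => exact ⟨t, ha⟩
    | vert q => exact absurd (mem_npop _ j ha) (by rw [vzero]; omega)
    | sag j' => exact absurd (mem_npop _ j ha) (by rw [szero]; omega)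
    | wag q j' => exact absurd (mem_npop _ j ha) (by rw [wzero]; omega)
  choose tOf htOf using hpopheld
  have htinj : Function.Injective tOf := by
    intro j j' hjj
    by_contra hne'
    have h1 := htOf j
    have h2 := htOf j'
    rw [hjj] at h1
    have hgt : 1 < npop π (Agent.edg (tOf j')) := by
      rw [npop, Finset.one_lt_card]
      exact ⟨Good.pop j, Finset.mem_filter.2 ⟨h1, rfl⟩,
        Good.pop j', Finset.mem_filter.2 ⟨h2, rfl⟩, by simp [hne']⟩
    have := eone (tOf j')
    omega
  -- each specialized good is held by some vertex agent
  have hspecheld : ∀ i0 : Fin k, ∃ q : Fin n, Good.spec i0 ∈ π (.vert q) := by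
    intro i0
    obtain ⟨a, ha⟩ := hcomplete (Good.spec i0)
    have hv := hnonwasteful a _ ha
    cases a with
    | vert q => exact ⟨q, ha⟩
    | edg t => simp [val] at hv
    | sag j' => simp [val] at hv
    | wag q j' => simp [val] at hv
  choose sOf hsOf using hspecheld
  have hsOfval : ∀ (i0 : Fin k) (q : Fin n), Good.spec i0 ∈ π (.vert q) → sOf i0 = q := by
    intro i0 q hq
    have := huniq _ _ _ (hsOf i0) hq
    injection this
  -- the set of vertices holding specialized goods
  have hV'card : ((Finset.univ : Finset (Fin k)).image sOf).card ≤ k - 1 := by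
    have himg : (Finset.univ : Finset (Fin k)).image sOf
        = ((Finset.univ : Finset (Fin k)).erase i').image sOf := by
      apply Finset.Subset.antisymm
      · intro q hq
        simp only [Finset.mem_image, Finset.mem_univ, true_and] at hq
        obtain ⟨j, hj⟩ := hq
        rcases eq_or_ne j i' with hji | hji
        · refine Finset.mem_image.2 ⟨i, Finset.mem_erase.2 ⟨hne, Finset.mem_univ i⟩, ?_⟩
          rw [hsOfval i p hi, ← hj, hji, hsOfval i' p hi']
        · exact Finset.mem_image.2 ⟨j, Finset.mem_erase.2 ⟨hji, Finset.mem_univ j⟩, hj⟩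
      · exact Finset.image_subset_image (Finset.erase_subset _ _)
    rw [himg]
    calc _ ≤ ((Finset.univ : Finset (Fin k)).erase i').card := Finset.card_image_le
      _ = k - 1 := by rw [Finset.card_erase_of_mem (Finset.mem_univ i')]; simp
  -- endpoints of popular edges hold specialized goods
  have hend : ∀ (j : Fin ℓ) (q : Fin n),
      (q = (ep (tOf j)).1 ∨ q = (ep (tOf j)).2) →
      q ∈ (Finset.univ : Finset (Fin k)).image sOf := by
    intro j q hq
    have h := hgef _ _ ((adjEV (tOf j) q hq).symm)
    rw [sumV, sumV, vzero] at h
    have h1 : 1 ≤ npop π (.edg (tOf j)) := mem_npop _ j (htOf j)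
    have h2 : 1 ≤ nspec π (.vert q) := by omega
    rw [nspec] at h2
    obtain ⟨g, hg⟩ := Finset.card_pos.1 h2
    rw [Finset.mem_filter] at hg
    obtain ⟨hg1, hg2⟩ := hg
    cases g with
    | spec i0 =>
        exact Finset.mem_image.2 ⟨i0, Finset.mem_univ i0, hsOfval i0 q hg1⟩
    | pop _ => simp [isSpec] at hg2
    | dum _ => simp [isSpec] at hg2
  -- final counting
  have hepne : ∀ t : Fin m, (ep t).1 ≠ (ep t).2 := fun t => (hep t).ne
  have hcount : ℓ ≤ (k - 1).choose 2 := by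
    have hinjOn : Set.InjOn
        (fun j : Fin ℓ => ({(ep (tOf j)).1, (ep (tOf j)).2} : Finset (Fin n)))
        ↑(Finset.univ : Finset (Fin ℓ)) := by
      intro j _ j' _ h
      simp only at h
      apply htinj
      apply hinj
      rcases pair_eq_pair h (hepne (tOf j)) with ⟨h1, h2⟩ | ⟨h1, h2⟩
      · left; exact Prod.ext h1 h2
      · right; exact Prod.ext h1 h2
    have hmaps : ∀ j ∈ (Finset.univ : Finset (Fin ℓ)),
        ({(ep (tOf j)).1, (ep (tOf j)).2} : Finset (Fin n))
          ∈ Finset.powersetCard 2 ((Finset.univ : Finset (Fin k)).image sOf) := by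
      intro j _
      rw [Finset.mem_powersetCard]
      constructor
      · intro q hq
        simp only [Finset.mem_insert, Finset.mem_singleton] at hq
        exact hend j q hq
      · rw [Finset.card_insert_of_notMem (by simp [hepne (tOf j)])]
        simp
    calc ℓ = (Finset.univ : Finset (Fin ℓ)).card := by simp
      _ ≤ (Finset.powersetCard 2 ((Finset.univ : Finset (Fin k)).image sOf)).card :=
          Finset.card_le_card_of_injOn _ hmaps hinjOn
      _ = ((Finset.univ : Finset (Fin k)).image sOf).card.choose 2 :=
          Finset.card_powersetCard 2 _
      _ ≤ (k - 1).choose 2 := Nat.choose_le_choose 2 hV'card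
  have hlt : (k - 1).choose 2 < k.choose 2 := by
    obtain ⟨j, rfl⟩ : ∃ j, k = j + 2 := ⟨k - 2, by omega⟩
    have h1 : (j + 2).choose 2 = (j+1).choose 1 + (j+1).choose 2 :=
      Nat.choose_succ_succ (j+1) 1
    have h2 : j + 2 - 1 = j + 1 := by omega
    rw [h2, h1, Nat.choose_one_right]
    omega
  omega


end CliqueGoodsReduction
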